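/- arXiv:1603.09458 — 2 statements merged into one kernel-verified Lean document; each statement's English description precedes it below -/
import Mathlib

section
/- Let A be a real n×k matrix of rank k (n ≥ k), let P be a k×k orthogonal matrix and D a k×k diagonal matrix with positive diagonal entries such that Pᵀ(AᵀA)⁻¹P = D, and let Λ = diag(λ_1,…,λ_k) and C = diag(c_1,…,c_k) be diagonal with 0 < λ_i < c_i for all i. Set K := D⁻¹Λ(C − Λ)⁻¹. Then AᵀA + PKPᵀ is invertible and for every real n×p matrix Y, P(I − ΛC⁻¹)DPᵀAᵀY = (AᵀA + PKPᵀ)⁻¹AᵀY. In particular, the Bayes estimator B̂_B := P(I − ΛC⁻¹)DPᵀAᵀY is a generalized ridge estimator. -/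
open Matrix

/-
Since `P` is orthogonal, `Pᵀ(AᵀA)⁻¹P = D` says `(AᵀA)⁻¹ = PDPᵀ`, hence `AᵀA = PD⁻¹Pᵀ` and
`AᵀA + PKPᵀ = P(D⁻¹ + K)Pᵀ` with `D⁻¹ + K` diagonal. Inverting conjugation by `P` is conjugation
by `P` of the inverse, so everything reduces to the scalar identity
`(1 - λ/c) d = (d⁻¹ + d⁻¹λ/(c - λ))⁻¹` on each diagonal entry.
-/

section Diagonal

variable {ι K : Type*} [Fintype ι] [DecidableEq ι] [Field K]

theorem Matrix.inv_diagonal_of_ne_zero {v : ι → K} (hv : ∀ i, v i ≠ 0) :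
    (diagonal v)⁻¹ = diagonal v⁻¹ := by
  refine inv_eq_right_inv ?_
  rw [diagonal_mul_diagonal, ← diagonal_one]
  exact congrArg diagonal (funext fun i => mul_inv_cancel₀ (hv i))

theorem Matrix.isUnit_diagonal_of_ne_zero {v : ι → K} (hv : ∀ i, v i ≠ 0) :
    IsUnit (diagonal v) :=
  isUnit_diagonal.mpr <| Pi.isUnit_iff.mpr fun i => (hv i).isUnit

end Diagonal

section Conjugation

variable {ι R : Type*} [Fintype ι] [DecidableEq ι] [CommRing R] {P : Matrix ι ι R}

theorem Matrix.eq_nonsing_inv_of_nonsing_inv_eq {M N : Matrix ι ι R} (h : M⁻¹ = N)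
    (hN : IsUnit N) : M = N⁻¹ := by
  have hM : IsUnit M.det := isUnit_nonsing_inv_det_iff.mp (h ▸ (isUnit_iff_isUnit_det N).mp hN)
  rw [← h, nonsing_inv_nonsing_inv M hM]

theorem Matrix.eq_mul_mul_transpose_of_transpose_mul_mul_eq (hP : Pᵀ * P = 1)
    {X D : Matrix ι ι R} (h : Pᵀ * X * P = D) : X = P * D * Pᵀ := by
  have hPPt : P * Pᵀ = 1 := mul_eq_one_comm.mp hP
  calc X = P * Pᵀ * X * (P * Pᵀ) := by rw [hPPt, Matrix.one_mul, Matrix.mul_one]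
    _ = P * (Pᵀ * X * P) * Pᵀ := by simp only [Matrix.mul_assoc]
    _ = P * D * Pᵀ := by rw [h]

theorem Matrix.inv_mul_mul_transpose (hP : Pᵀ * P = 1) (D : Matrix ι ι R) :
    (P * D * Pᵀ)⁻¹ = P * D⁻¹ * Pᵀ := by
  rw [Matrix.mul_inv_rev, Matrix.mul_inv_rev, inv_eq_right_inv hP,
    inv_eq_right_inv (mul_eq_one_comm.mp hP), Matrix.mul_assoc]

theorem Matrix.isUnit_mul_mul_transpose (hP : Pᵀ * P = 1) {D : Matrix ι ι R} (hD : IsUnit D) :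
    IsUnit (P * D * Pᵀ) :=
  ((IsUnit.of_mul_eq_one _ (mul_eq_one_comm.mp hP)).mul hD).mul (IsUnit.of_mul_eq_one _ hP)

end Conjugation

theorem one_sub_mul_inv_mul_eq_inv {K : Type*} [Field K] {l c : K} (hc : c ≠ 0) (hlc : l ≠ c)
    (d : K) : (1 - l * c⁻¹) * d = (d⁻¹ + d⁻¹ * l * (c - l)⁻¹)⁻¹ := by
  rcases eq_or_ne d 0 with rfl | hd
  · simp
  have hcl : c - l ≠ 0 := sub_ne_zero.mpr hlc.symm
  field_simp
  ring_nf
  exact (mul_inv_cancel₀ hc).symm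

theorem stmt1_general (n k p : ℕ)
    (A : Matrix (Fin n) (Fin k) ℝ)
    (P : Matrix (Fin k) (Fin k) ℝ) (hP : Pᵀ * P = 1)
    (d : Fin k → ℝ) (hd : ∀ i, 0 < d i)
    (hPD : Pᵀ * (Aᵀ * A)⁻¹ * P = diagonal d)
    (lam c : Fin k → ℝ) (hlc : ∀ i, 0 < lam i ∧ lam i < c i) :
    IsUnit (Aᵀ * A +
        P * ((diagonal d)⁻¹ * diagonal lam * (diagonal c - diagonal lam)⁻¹) * Pᵀ) ∧
      ∀ Y : Matrix (Fin n) (Fin p) ℝ,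
        P * (1 - diagonal lam * (diagonal c)⁻¹) * diagonal d * Pᵀ * Aᵀ * Y =
          (Aᵀ * A +
              P * ((diagonal d)⁻¹ * diagonal lam * (diagonal c - diagonal lam)⁻¹) *
                Pᵀ)⁻¹ * Aᵀ * Y := by
  have hd0 : ∀ i, d i ≠ 0 := fun i => (hd i).ne'
  have hc0 : ∀ i, c i ≠ 0 := fun i => ((hlc i).1.trans (hlc i).2).ne'
  have hcl0 : ∀ i, (c - lam) i ≠ 0 := fun i => sub_ne_zero.mpr (hlc i).2.ne'
  set e : Fin k → ℝ := d⁻¹ + d⁻¹ * lam * (c - lam)⁻¹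
  have he0 : ∀ i, e i ≠ 0 := fun i =>
    (add_pos (inv_pos.mpr (hd i))
      (div_pos (mul_pos (inv_pos.mpr (hd i)) (hlc i).1) (sub_pos.mpr (hlc i).2))).ne'
  have hAtA : Aᵀ * A = P * diagonal d⁻¹ * Pᵀ := by
    rw [eq_nonsing_inv_of_nonsing_inv_eq (eq_mul_mul_transpose_of_transpose_mul_mul_eq hP hPD)
        (isUnit_mul_mul_transpose hP (isUnit_diagonal_of_ne_zero hd0)),
      inv_mul_mul_transpose hP, inv_diagonal_of_ne_zero hd0]
  have hsum : Aᵀ * A +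
      P * ((diagonal d)⁻¹ * diagonal lam * (diagonal c - diagonal lam)⁻¹) * Pᵀ =
        P * diagonal e * Pᵀ := by
    have hsub : diagonal c - diagonal lam = diagonal (c - lam) := diagonal_sub c lam
    rw [hAtA, inv_diagonal_of_ne_zero hd0, hsub, inv_diagonal_of_ne_zero hcl0,
      diagonal_mul_diagonal, diagonal_mul_diagonal, ← Matrix.add_mul, ← Matrix.mul_add,
      diagonal_add]
    rfl
  have hcoef : (1 - diagonal lam * (diagonal c)⁻¹) * diagonal d = diagonal e⁻¹ := by
    rw [inv_diagonal_of_ne_zero hc0, diagonal_mul_diagonal, ← diagonal_one, diagonal_sub,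
      diagonal_mul_diagonal]
    exact congrArg diagonal <| funext fun i =>
      one_sub_mul_inv_mul_eq_inv (hc0 i) (hlc i).2.ne (d i)
  refine ⟨hsum ▸ isUnit_mul_mul_transpose hP (isUnit_diagonal_of_ne_zero he0), fun Y => ?_⟩
  rw [hsum, inv_mul_mul_transpose hP, Matrix.mul_assoc P, hcoef, inv_diagonal_of_ne_zero he0]

/-- The Bayes estimator `P(I − ΛC⁻¹)DPᵀAᵀY` is a generalized ridge estimator: with
`K := D⁻¹Λ(C − Λ)⁻¹`, the matrix `AᵀA + PKPᵀ` is invertible and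
`P(I − ΛC⁻¹)DPᵀAᵀY = (AᵀA + PKPᵀ)⁻¹AᵀY` for every `Y`. -/
theorem stmt1 (n k p : ℕ) (hnk : k ≤ n)
    (A : Matrix (Fin n) (Fin k) ℝ) (hA : A.rank = k)
    (P : Matrix (Fin k) (Fin k) ℝ) (hP : Pᵀ * P = 1)
    (d : Fin k → ℝ) (hd : ∀ i, 0 < d i)
    (hPD : Pᵀ * (Aᵀ * A)⁻¹ * P = diagonal d)
    (lam c : Fin k → ℝ) (hlc : ∀ i, 0 < lam i ∧ lam i < c i) :
    IsUnit (Aᵀ * A +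
        P * ((diagonal d)⁻¹ * diagonal lam * (diagonal c - diagonal lam)⁻¹) * Pᵀ) ∧
      ∀ Y : Matrix (Fin n) (Fin p) ℝ,
        P * (1 - diagonal lam * (diagonal c)⁻¹) * diagonal d * Pᵀ * Aᵀ * Y =
          (Aᵀ * A +
              P * ((diagonal d)⁻¹ * diagonal lam * (diagonal c - diagonal lam)⁻¹) *
                Pᵀ)⁻¹ * Aᵀ * Y :=
  stmt1_general n k p A P hP d hd hPD lam c hlc
end

section
/- Let p ≥ 2 and m ≥ 1 be integers, let w ∈ ℝ^p be nonzero, let Z be a real m×p matrix such that S := ZᵀZ is invertible, and let R be a p×p orthogonal matrix with Rw = ‖w‖ e_1. Write ZRᵀ = (v_1 | V_2), where v_1 ∈ ℝ^m is the first column and V_2 ∈ ℝ^{m×(p−1)} consists of the remaining columns, and assume V_2ᵀV_2 is invertible. Then wᵀS⁻¹w = (wᵀw) / ( v_1ᵀ(I_m − V_2(V_2ᵀV_2)⁻¹V_2ᵀ)v_1 ). -/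
/-!
Write `U = ZRᵀ` and `G = UᵀU`. Since `Z = UR`, `S = RᵀGR`, and `Rw = ‖w‖e₁` turns `wᵀS⁻¹w` into
`‖w‖² e₁ᵀG⁻¹e₁`. This corner of the inverse Gram matrix is the reciprocal of the Schur complement
`c = v₁ᵀ(I − P)v₁`, `P` the projection onto the columns of `V₂`: the vector
`u = e₁ − (0, (V₂ᵀV₂)⁻¹V₂ᵀv₁)` has `Uu = (I − P)v₁`, which is orthogonal to the columns of `V₂`,
so `Gu = c e₁` while `e₁ᵀu = 1`.
-/

open Matrix

section Gram

variable {K : Type*} [Field K] {m ι κ : Type*}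

theorem Matrix.transpose_mul_one_sub_projection [Fintype m] [DecidableEq m] [Fintype κ]
    [DecidableEq κ] (V : Matrix m κ K) (hV : IsUnit (Vᵀ * V)) :
    Vᵀ * (1 - V * (Vᵀ * V)⁻¹ * Vᵀ) = 0 := by
  rw [Matrix.mul_sub, Matrix.mul_one, ← Matrix.mul_assoc, ← Matrix.mul_assoc,
    Matrix.mul_nonsing_inv _ ((isUnit_iff_isUnit_det _).mp hV), Matrix.one_mul, sub_self]

theorem Matrix.transpose_mulVec_eq_smul_single [Fintype m] [DecidableEq ι] (U : Matrix m ι K)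
    {i₀ : ι} {e : κ → ι} (he : Set.range e = {i₀}ᶜ) {r : m → K}
    (hr : (U.submatrix id e)ᵀ *ᵥ r = 0) :
    Uᵀ *ᵥ r = ((fun k => U k i₀) ⬝ᵥ r) • Pi.single i₀ 1 := by
  ext i
  by_cases hi : i = i₀
  · subst hi
    simp [mulVec, dotProduct]
  · obtain ⟨j, rfl⟩ : i ∈ Set.range e := he ▸ hi
    simpa [hi, mulVec, dotProduct] using congrFun hr j

theorem Matrix.mulVec_single_sub_submatrix_one [Fintype ι] [DecidableEq ι] [Fintype κ]
    (U : Matrix m ι K) (i₀ : ι) (e : κ → ι) (x : κ → K) :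
    U *ᵥ (Pi.single i₀ 1 - (1 : Matrix ι ι K).submatrix id e *ᵥ x) =
      (fun k => U k i₀) - U.submatrix id e *ᵥ x := by
  have hUe : U * (1 : Matrix ι ι K).submatrix id e = U.submatrix id e :=
    mul_submatrix_one (Equiv.refl ι) e U
  rw [mulVec_sub, mulVec_single_one, mulVec_mulVec, hUe]
  rfl

theorem single_dotProduct_single_sub_submatrix_one [Fintype ι] [DecidableEq ι] [Fintype κ]
    {i₀ : ι} {e : κ → ι} (he : i₀ ∉ Set.range e) (x : κ → K) :
    Pi.single i₀ 1 ⬝ᵥ (Pi.single i₀ 1 - (1 : Matrix ι ι K).submatrix id e *ᵥ x) = 1 := by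
  have : ∀ j, i₀ ≠ e j := fun j h => he ⟨j, h.symm⟩
  rw [single_dotProduct]
  simp [mulVec, dotProduct, one_apply, this]

theorem dotProduct_inv_mulVec_eq_inv [Fintype ι] [DecidableEq ι] {A : Matrix ι ι K}
    (hA : IsUnit A) {u y : ι → K} {c : K} (hAu : A *ᵥ u = c • y) (hyu : y ⬝ᵥ u = 1) :
    y ⬝ᵥ (A⁻¹ *ᵥ y) = c⁻¹ := by
  have hdet := (isUnit_iff_isUnit_det A).mp hA
  have hc : c ≠ 0 := by
    rintro rfl
    have hu : u = 0 := by
      rw [← one_mulVec u, ← nonsing_inv_mul A hdet, ← mulVec_mulVec, hAu, zero_smul, mulVec_zero]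
    simp [hu] at hyu
  have hy : A⁻¹ *ᵥ y = c⁻¹ • u := by
    have hAu' : y = A *ᵥ (c⁻¹ • u) := by
      rw [mulVec_smul, hAu, smul_smul, inv_mul_cancel₀ hc, one_smul]
    rw [hAu', mulVec_mulVec, nonsing_inv_mul A hdet, one_mulVec]
  rw [hy, dotProduct_smul, hyu, smul_eq_mul, mul_one]

theorem single_dotProduct_inv_gram_mulVec_single [Fintype m] [DecidableEq m] [Fintype ι]
    [DecidableEq ι] [Fintype κ] [DecidableEq κ] (U : Matrix m ι K) {i₀ : ι} {e : κ → ι}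
    (he : Set.range e = {i₀}ᶜ) (hU : IsUnit (Uᵀ * U))
    (hV : IsUnit ((U.submatrix id e)ᵀ * U.submatrix id e)) :
    Pi.single i₀ 1 ⬝ᵥ ((Uᵀ * U)⁻¹ *ᵥ Pi.single i₀ 1) =
      ((fun k => U k i₀) ⬝ᵥ ((1 - U.submatrix id e * ((U.submatrix id e)ᵀ * U.submatrix id e)⁻¹ *
        (U.submatrix id e)ᵀ) *ᵥ (fun k => U k i₀)))⁻¹ := by
  set V := U.submatrix id e
  set v := fun k => U k i₀
  have hi₀ : i₀ ∉ Set.range e := by simp [he]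
  set x := (Vᵀ * V)⁻¹ *ᵥ (Vᵀ *ᵥ v)
  have hUu : U *ᵥ (Pi.single i₀ 1 - (1 : Matrix ι ι K).submatrix id e *ᵥ x) =
      (1 - V * (Vᵀ * V)⁻¹ * Vᵀ) *ᵥ v := by
    rw [mulVec_single_sub_submatrix_one, sub_mulVec, one_mulVec, mulVec_mulVec, mulVec_mulVec]
  have hr : Vᵀ *ᵥ ((1 - V * (Vᵀ * V)⁻¹ * Vᵀ) *ᵥ v) = 0 := by
    rw [mulVec_mulVec, transpose_mul_one_sub_projection V hV, zero_mulVec]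
  refine dotProduct_inv_mulVec_eq_inv hU ?_ (single_dotProduct_single_sub_submatrix_one hi₀ x)
  rw [← mulVec_mulVec, hUu, transpose_mulVec_eq_smul_single U he hr]

theorem dotProduct_inv_conj_mulVec [Fintype ι] [DecidableEq ι] {R : Matrix ι ι K}
    (hR : Rᵀ * R = 1) (A : Matrix ι ι K) (w : ι → K) :
    w ⬝ᵥ ((Rᵀ * A * R)⁻¹ *ᵥ w) = (R *ᵥ w) ⬝ᵥ (A⁻¹ *ᵥ (R *ᵥ w)) := by
  rw [Matrix.mul_inv_rev, Matrix.mul_inv_rev, inv_eq_left_inv hR, inv_eq_right_inv hR,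
    ← mulVec_mulVec, ← mulVec_mulVec, dotProduct_mulVec, vecMul_transpose]

end Gram

theorem Fin.range_cast_succ {n p : ℕ} (h : n + 1 = p) :
    Set.range (fun j : Fin n => Fin.cast h j.succ) = {⟨0, h ▸ n.succ_pos⟩}ᶜ := by
  rw [← Function.comp_def, Set.range_comp, Fin.range_succ]
  have h0 := (finCongr h).image_compl {0}
  simp only [Set.image_singleton] at h0
  exact h0

/-- Rotation identity: if `R` is orthogonal with `Rw = ‖w‖e₁`, `ZRᵀ = (v₁ | V₂)`, and
`S = ZᵀZ` and `V₂ᵀV₂` are invertible, then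
`wᵀS⁻¹w = wᵀw / (v₁ᵀ(I − V₂(V₂ᵀV₂)⁻¹V₂ᵀ)v₁)`. -/
theorem stmt19 (p m : ℕ) (hp : 2 ≤ p)
    (w : Fin p → ℝ)
    (Z : Matrix (Fin m) (Fin p) ℝ) (hS : IsUnit (Zᵀ * Z))
    (R : Matrix (Fin p) (Fin p) ℝ) (hR : Rᵀ * R = 1)
    (hRw : R *ᵥ w = Real.sqrt (w ⬝ᵥ w) • (Pi.single (⟨0, by omega⟩ : Fin p) 1 : Fin p → ℝ))
    (v1 : Fin m → ℝ) (hv1 : v1 = fun i => (Z * Rᵀ) i ⟨0, by omega⟩)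
    (V2 : Matrix (Fin m) (Fin (p - 1)) ℝ)
    (hV2 : V2 = (Z * Rᵀ).submatrix id
      (fun j : Fin (p - 1) => Fin.cast (by omega) j.succ))
    (hV2inv : IsUnit (V2ᵀ * V2)) :
    w ⬝ᵥ ((Zᵀ * Z)⁻¹ *ᵥ w) =
      (w ⬝ᵥ w) / (v1 ⬝ᵥ ((1 - V2 * (V2ᵀ * V2)⁻¹ * V2ᵀ) *ᵥ v1)) := by
  subst hv1 hV2
  have hRRt : R * Rᵀ = 1 := mul_eq_one_comm.mp hR
  have hSG : Zᵀ * Z = Rᵀ * ((Z * Rᵀ)ᵀ * (Z * Rᵀ)) * R := by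
    simp only [transpose_mul, transpose_transpose, Matrix.mul_assoc, hR, Matrix.mul_one]
    simp only [← Matrix.mul_assoc, hR, Matrix.one_mul]
  have hG : IsUnit ((Z * Rᵀ)ᵀ * (Z * Rᵀ)) := by
    have : (Z * Rᵀ)ᵀ * (Z * Rᵀ) = R * (Zᵀ * Z) * Rᵀ := by
      simp only [transpose_mul, transpose_transpose, Matrix.mul_assoc]
    rw [this]
    exact ((Units.mk R Rᵀ hRRt hR).isUnit.mul hS).mul (Units.mk Rᵀ R hR hRRt).isUnit
  have hw : √(w ⬝ᵥ w) * √(w ⬝ᵥ w) = w ⬝ᵥ w :=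
    Real.mul_self_sqrt (Finset.sum_nonneg fun i _ => mul_self_nonneg (w i))
  rw [hSG, dotProduct_inv_conj_mulVec hR, hRw, smul_dotProduct, mulVec_smul, dotProduct_smul,
    single_dotProduct_inv_gram_mulVec_single (Z * Rᵀ) (Fin.range_cast_succ _) hG hV2inv,
    smul_eq_mul, smul_eq_mul, ← mul_assoc, hw, div_eq_mul_inv]
end
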